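/- In the setting of the dithered nested linear code index counting, for 1 ≤ t ≤ K-1, the rank-(K+t) index set satisfies |I_{K+t}| ≤ q^{n_1+⋯+n_K} · q^{K²} · ∑_{1 ≤ j_1 < ⋯ < j_t ≤ K} q^{n_{j_1}+⋯+n_{j_t}}. -/

import Mathlib

open scoped BigOperators

/-- The rank of the `2K`-row matrix whose rows are `[e_k, η_k(l_k)]` and
`[e_k, η_k(l̃_k)]`, viewed as the dimension of the span of the rows in
`F^K × F^κ`. -/
noncomputable def pairRank {F : Type*} [Field F] (κ K : ℕ)
    {Idx : Fin K → Type*} (η : (k : Fin K) → Idx k → Fin κ → F)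
    (p : ((k : Fin K) → Idx k) × ((k : Fin K) → Idx k)) : ℕ :=
  Module.finrank F (Submodule.span F (Set.range (Sum.elim
    (fun k : Fin K => (((Pi.single k 1 : Fin K → F), η k (p.1 k)) : (Fin K → F) × (Fin κ → F)))
    (fun k : Fin K => ((Pi.single k 1 : Fin K → F), η k (p.2 k))))))

/-! Subtracting each row `[e_k, η(l_k)]` from `[e_k, η(l̃_k)]` shows that the rank is `K` plus the
rank of the differences `d_k = η(l̃_k) - η(l_k)`: the rows `[e_k, η(l_k)]` are independent and lie
in a graph over `F^K`, the differences lie in `0 × F^κ`. So on `I_{K+t}` all `d_k` are spanned by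
the `d_j`, `j ∈ s`, for some `t`-subset `s`. For fixed `s`, injectivity of `η` makes a pair
`(l, l̃)` determined by `l`, by `l̃` on `s` and by the `K × t` coefficients expressing every `d_k`
through the `d_j`, `j ∈ s`; this leaves at most `q^{∑ n_k} q^{∑_{j ∈ s} n_j} q^{Kt}` pairs, and
`Kt ≤ K²`. -/

open Set Submodule Module

section Graph

variable {R M N : Type*} [Ring R] [AddCommGroup M] [Module R M] [AddCommGroup N] [Module R N]

theorem span_range_sumElim_eq_sup_sub {ι : Type*} (a b : ι → M) :
    span R (range (Sum.elim a b)) = span R (range a) ⊔ span R (range (b - a)) := by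
  rw [Set.Sum.elim_range, span_union]
  refine le_antisymm (sup_le le_sup_left (span_le.2 ?_)) (sup_le le_sup_left (span_le.2 ?_))
  all_goals rintro _ ⟨k, rfl⟩
  · rw [← add_sub_cancel (a k) (b k)]
    exact add_mem (mem_sup_left (subset_span ⟨k, rfl⟩)) (mem_sup_right (subset_span ⟨k, rfl⟩))
  · exact sub_mem (mem_sup_right (subset_span ⟨k, rfl⟩)) (mem_sup_left (subset_span ⟨k, rfl⟩))

theorem LinearMap.disjoint_graph_ker_fst (f : M →ₗ[R] N) :
    Disjoint f.graph (LinearMap.ker (LinearMap.fst R M N)) := by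
  rw [disjoint_def]
  intro x hgraph hker
  rw [LinearMap.mem_graph_iff] at hgraph
  rw [LinearMap.mem_ker, LinearMap.fst_apply] at hker
  ext <;> simp [hgraph, hker]

end Graph

theorem finrank_span_range_sumElim_single {F W ι : Type*} [Field F] [AddCommGroup W] [Module F W]
    [Fintype ι] [DecidableEq ι] (u v : ι → W) :
    finrank F (span F (range (Sum.elim (fun k => ((Pi.single k 1 : ι → F), u k))
      fun k => ((Pi.single k 1 : ι → F), v k)))) =
      Fintype.card ι + finrank F (span F (range (v - u))) := by
  set a : ι → (ι → F) × W := fun k => (Pi.single k 1, u k)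
  set b : ι → (ι → F) × W := fun k => (Pi.single k 1, v k)
  have hli : LinearIndependent F a :=
    .of_comp (LinearMap.fst F _ W) (Pi.linearIndependent_single_one ι F)
  have hgraph : span F (range a) ≤ (Fintype.linearCombination F u).graph :=
    span_le.2 <| by
      rintro _ ⟨k, rfl⟩
      simp [a, LinearMap.mem_graph_iff, Fintype.linearCombination_apply_single]
  have hker : span F (range (b - a)) ≤ LinearMap.ker (LinearMap.fst F (ι → F) W) :=
    span_le.2 <| by
      rintro _ ⟨k, rfl⟩
      simp [a, b]
  have hdisj := (LinearMap.disjoint_graph_ker_fst _).mono hgraph hker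
  have hsub : b - a = LinearMap.inr F (ι → F) W ∘ (v - u) := by
    ext k <;> simp [a, b]
  have := FiniteDimensional.span_of_finite F (finite_range a)
  have := FiniteDimensional.span_of_finite F (finite_range (b - a))
  have hsum := finrank_sup_add_finrank_inf_eq (span F (range a)) (span F (range (b - a)))
  rw [hdisj.eq_bot, finrank_bot, add_zero] at hsum
  rw [span_range_sumElim_eq_sup_sub, hsum, finrank_span_eq_card hli, hsub, range_comp,
    ← map_span, ← (equivMapOfInjective _ LinearMap.inr_injective _).finrank_eq]

theorem exists_card_eq_range_subset_span_image {K V ι : Type*} [DivisionRing K] [AddCommGroup V]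
    [Module K V] [Fintype ι] (v : ι → V) {t : ℕ} (hrank : finrank K (span K (range v)) ≤ t)
    (ht : t ≤ Fintype.card ι) : ∃ s : Finset ι, s.card = t ∧ range v ⊆ span K (v '' s) := by
  classical
  obtain ⟨b, -, -, hspan, hli⟩ :=
    exists_linearIndepOn_extension (linearIndepOn_empty K v) (empty_subset univ)
  have hcard : b.toFinset.card ≤ t := by
    rw [toFinset_card, ← finrank_span_eq_card hli, ← image_eq_range]
    have := Module.Finite.span_of_finite K (finite_range v)
    exact (Submodule.finrank_mono (span_mono (image_subset_range v b))).trans hrank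
  obtain ⟨s, hbs, -, hs⟩ :=
    Finset.exists_subsuperset_card_eq (Finset.subset_univ _) hcard (by simpa using ht)
  refine ⟨s, hs, ?_⟩
  rw [← image_univ]
  exact hspan.trans (span_mono (image_mono (by simpa using hbs)))

theorem ncard_setOf_forall_mem_span_image_le {F V ι : Type*} [Field F] [Finite F]
    [AddCommGroup V] [Module F V] [Fintype ι] {α : ι → Type*} [∀ i, Finite (α i)]
    (η : ∀ i, α i → V) (hη : ∀ i, Function.Injective (η i)) (s : Finset ι) :
    {p : (∀ i, α i) × (∀ i, α i) | ∀ k, η k (p.2 k) - η k (p.1 k) ∈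
        span F ((fun j => η j (p.2 j) - η j (p.1 j)) '' s)}.ncard ≤
      Nat.card (∀ i, α i) * Nat.card (∀ j : s, α j) * Nat.card F ^ (Fintype.card ι * s.card) := by
  set d := fun (p : (∀ i, α i) × (∀ i, α i)) j => η j (p.2 j) - η j (p.1 j)
  choose! c hc using fun p (hp : ∀ k, d p k ∈ span F (d p '' s)) k =>
    (Fintype.mem_span_image_iff_exists_fun F).1 (hp k)
  refine (ncard_le_ncard_of_injOn (t := univ) (fun p => (p.1, fun j : s => p.2 j, c p))
    (fun _ _ => mem_univ _) ?_).trans ?_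
  · rintro p hp p' hp' h
    simp only [Prod.mk.injEq] at h
    obtain ⟨h1, h2, h3⟩ := h
    have hs : ∀ j : s, d p j = d p' j := fun j => by simp only [d, h1, congrFun h2 j]
    have hd : ∀ k, d p k = d p' k := fun k => by
      rw [← hc p hp k, ← hc p' hp' k, h3]
      simp only [hs]
    refine Prod.ext h1 (funext fun k => hη k ?_)
    simpa [d, h1] using hd k
  · rw [ncard_univ, Nat.card_prod, Nat.card_prod, Nat.card_fun, Nat.card_fun, Nat.card_coe_set_eq,
      ncard_coe_finset, Nat.card_eq_fintype_card (α := ι), ← pow_mul, mul_comm s.card, ← mul_assoc]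

theorem Nat.card_pi_fin_pow {ι : Type*} [Fintype ι] (q : ℕ) (n : ι → ℕ) :
    Nat.card (∀ i, Fin (q ^ n i)) = q ^ ∑ i, n i := by
  simp [Nat.card_pi, Finset.prod_pow_eq_pow_sum]

theorem pairRank_eq {F : Type*} [Field F] (κ K : ℕ) {Idx : Fin K → Type*}
    (η : (k : Fin K) → Idx k → Fin κ → F) (p : ((k : Fin K) → Idx k) × ((k : Fin K) → Idx k)) :
    pairRank κ K η p = K + finrank F (span F (range fun k => η k (p.2 k) - η k (p.1 k))) := by
  rw [pairRank, finrank_span_range_sumElim_single, Fintype.card_fin]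
  rfl

theorem stmt_10 {F : Type*} [Field F] [Fintype F]
    (q κ K : ℕ) (hq : Fintype.card F = q)
    (nk : Fin K → ℕ)
    (η : (k : Fin K) → Fin (q ^ nk k) → Fin κ → F)
    (hη : ∀ k, Function.Injective (η k))
    (t : ℕ) (ht2 : t ≤ K - 1) :
    Set.ncard {p : ((k : Fin K) → Fin (q ^ nk k)) × ((k : Fin K) → Fin (q ^ nk k)) |
        pairRank κ K η p = K + t}
      ≤ q ^ (∑ k, nk k) * q ^ (K ^ 2) *
          ∑ s ∈ Finset.powersetCard t (Finset.univ : Finset (Fin K)),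
            q ^ (∑ k ∈ s, nk k) := by
  have htK : t ≤ K := ht2.trans (Nat.sub_le K 1)
  set d := fun (p : ((k : Fin K) → Fin (q ^ nk k)) × ((k : Fin K) → Fin (q ^ nk k))) k =>
    η k (p.2 k) - η k (p.1 k)
  set T := fun s : Finset (Fin K) => {p | ∀ k, d p k ∈ span F (d p '' s)}
  have hcover :
      {p | pairRank κ K η p = K + t} ⊆ ⋃ s ∈ Finset.powersetCard t Finset.univ, T s := by
    intro p hp
    have hrank : K + finrank F (span F (range (d p))) = K + t :=
      (pairRank_eq κ K η p).symm.trans hp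
    obtain ⟨s, hs, hspan⟩ := exists_card_eq_range_subset_span_image (K := F) (d p)
      (Nat.add_left_cancel hrank).le (by simpa using htK)
    exact mem_biUnion (Finset.mem_powersetCard.2 ⟨Finset.subset_univ s, hs⟩)
      fun k => hspan ⟨k, rfl⟩
  calc _ ≤ ∑ s ∈ Finset.powersetCard t Finset.univ, (T s).ncard :=
        (ncard_le_ncard hcover).trans (Finset.set_ncard_biUnion_le _ _)
    _ ≤ ∑ s ∈ Finset.powersetCard t Finset.univ,
        q ^ (∑ k, nk k) * q ^ (K ^ 2) * q ^ (∑ k ∈ s, nk k) := by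
      gcongr with s hs
      refine (ncard_setOf_forall_mem_span_image_le η hη s).trans ?_
      rw [Nat.card_pi_fin_pow, Nat.card_pi_fin_pow q (fun j : s => nk j), Finset.sum_coe_sort,
        Nat.card_eq_fintype_card, hq, Fintype.card_fin, (Finset.mem_powersetCard.1 hs).2,
        mul_right_comm]
      gcongr
      · exact hq ▸ Fintype.card_pos
      · exact sq K ▸ Nat.mul_le_mul_left K htK
    _ = _ := by rw [Finset.mul_sum]
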